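/- arXiv:2206.06394 — 4 statements merged into one kernel-verified Lean document; each statement's English description precedes it below -/
import Mathlib

section
/- Let $a_1 \le a_2 \le a_3$ be positive real numbers with $a_3/a_1 \le \sqrt{2}$. Define quadratic forms $Q_1(k_1,k_2) = \frac{a_1^2+a_3^2}{a_3^2}k_1^2 + \frac{2a_1a_2}{a_3^2}k_1k_2 + \frac{a_2^2+a_3^2}{a_3^2}k_2^2$ and $Q_2(k_1,k_2) = \frac{2a_1}{a_3}k_1^2 + \frac{2(a_1+a_2-a_3)}{a_3}k_1k_2 + \frac{2a_2}{a_3}k_2^2$. Then for all real $k_1, k_2$, $Q_1(k_1,k_2) \le c_0 Q_2(k_1,k_2)$ where $c_0 = \frac{1}{\sqrt{2}-\frac{1}{2}}$. -/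
private lemma disc_aux (a₁ a₂ a₃ s : ℝ) (h₁ : 0 < a₁) (h₁₂ : a₁ ≤ a₂) (h₂₃ : a₂ ≤ a₃)
    (hs : s^2 = 2) (hs0 : 0 ≤ s) (ha : a₃ ≤ s * a₁) :
    (2*(2+4*s)*a₃*(a₁+a₂-a₃) - 14*a₁*a₂)^2
      ≤ 4*(2*(2+4*s)*a₁*a₃ - 7*a₁^2 - 7*a₃^2)*(2*(2+4*s)*a₂*a₃ - 7*a₂^2 - 7*a₃^2) := by
  have hu : (0:ℝ) ≤ a₂ - a₁ := by linarith
  have hv : (0:ℝ) ≤ s*a₁ - a₃ := by linarith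
  have hw : (0:ℝ) ≤ a₃ - a₂ := by linarith
  have t0 : (0:ℝ) ≤ (416+272*s)*((s*a₁-a₃)*(a₃-a₂)^3) := mul_nonneg (by linarith) (mul_nonneg hv (pow_nonneg hw 3))
  have t1 : (0:ℝ) ≤ (760+512*s)*((s*a₁-a₃)^2*(a₃-a₂)^2) := mul_nonneg (by linarith) (mul_nonneg (pow_nonneg hv 2) (pow_nonneg hw 2))
  have t2 : (0:ℝ) ≤ (400+352*s)*((s*a₁-a₃)^3*(a₃-a₂)) := mul_nonneg (by linarith) (mul_nonneg (pow_nonneg hv 3) hw)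
  have t3 : (0:ℝ) ≤ (108+48*s)*((s*a₁-a₃)^4) := mul_nonneg (by linarith) (pow_nonneg hv 4)
  have t4 : (0:ℝ) ≤ (272+208*s)*((a₂-a₁)*(a₃-a₂)^3) := mul_nonneg (by linarith) (mul_nonneg hu (pow_nonneg hw 3))
  have t5 : (0:ℝ) ≤ (1648+1168*s)*((a₂-a₁)*(s*a₁-a₃)*(a₃-a₂)^2) := mul_nonneg (by linarith) (mul_nonneg (mul_nonneg hu hv) (pow_nonneg hw 2))
  have t6 : (0:ℝ) ≤ (1816+1112*s)*((a₂-a₁)*(s*a₁-a₃)^2*(a₃-a₂)) := mul_nonneg (by linarith) (mul_nonneg (mul_nonneg hu (pow_nonneg hv 2)) hw)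
  have t7 : (0:ℝ) ≤ (392+392*s)*((a₂-a₁)*(s*a₁-a₃)^3) := mul_nonneg (by linarith) (mul_nonneg hu (pow_nonneg hv 3))
  have t8 : (0:ℝ) ≤ (616+448*s)*((a₂-a₁)^2*(a₃-a₂)^2) := mul_nonneg (by linarith) (mul_nonneg (pow_nonneg hu 2) (pow_nonneg hw 2))
  have t9 : (0:ℝ) ≤ (1696+1320*s)*((a₂-a₁)^2*(s*a₁-a₃)*(a₃-a₂)) := mul_nonneg (by linarith) (mul_nonneg (mul_nonneg (pow_nonneg hu 2) hv) hw)
  have t10 : (0:ℝ) ≤ (956+512*s)*((a₂-a₁)^2*(s*a₁-a₃)^2) := mul_nonneg (by linarith) (mul_nonneg (pow_nonneg hu 2) (pow_nonneg hv 2))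
  have t11 : (0:ℝ) ≤ (416+272*s)*((a₂-a₁)^3*(a₃-a₂)) := mul_nonneg (by linarith) (mul_nonneg (pow_nonneg hu 3) hw)
  have t12 : (0:ℝ) ≤ (464+424*s)*((a₂-a₁)^3*(s*a₁-a₃)) := mul_nonneg (by linarith) (mul_nonneg (pow_nonneg hu 3) hv)
  have t13 : (0:ℝ) ≤ (72+32*s)*((a₂-a₁)^4) := mul_nonneg (by linarith) (pow_nonneg hu 4)
  have hkey : 4*(2*(2+4*s)*a₁*a₃ - 7*a₁^2 - 7*a₃^2)*(2*(2+4*s)*a₂*a₃ - 7*a₂^2 - 7*a₃^2)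
      - (2*(2+4*s)*a₃*(a₁+a₂-a₃) - 14*a₁*a₂)^2
      = (416+272*s)*((s*a₁-a₃)*(a₃-a₂)^3) + (760+512*s)*((s*a₁-a₃)^2*(a₃-a₂)^2) + (400+352*s)*((s*a₁-a₃)^3*(a₃-a₂)) + (108+48*s)*((s*a₁-a₃)^4) + (272+208*s)*((a₂-a₁)*(a₃-a₂)^3) + (1648+1168*s)*((a₂-a₁)*(s*a₁-a₃)*(a₃-a₂)^2) + (1816+1112*s)*((a₂-a₁)*(s*a₁-a₃)^2*(a₃-a₂)) + (392+392*s)*((a₂-a₁)*(s*a₁-a₃)^3) + (616+448*s)*((a₂-a₁)^2*(a₃-a₂)^2) + (1696+1320*s)*((a₂-a₁)^2*(s*a₁-a₃)*(a₃-a₂)) + (956+512*s)*((a₂-a₁)^2*(s*a₁-a₃)^2) + (416+272*s)*((a₂-a₁)^3*(a₃-a₂)) + (464+424*s)*((a₂-a₁)^3*(s*a₁-a₃)) + (72+32*s)*((a₂-a₁)^4) := by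
    linear_combination ((-64)*a₃^4 + (128)*a₂*a₃^3 + (-64)*a₂^2*a₃^2 + (16)*a₁*a₃^3 + (-168)*a₁*a₂*a₃^2 + (24)*a₁*a₂^2*a₃ + (-152)*a₁^2*a₃^2 + (256)*a₁^2*a₃^2*s + (160)*a₁^2*a₂*a₃ + (32)*a₁^2*a₂*a₃*s + (-100)*a₁^2*a₂^2 + (88)*a₁^2*a₂^2*s + (24)*a₁^3*a₃ + (-32)*a₁^3*a₃*s + (-160)*a₁^3*a₃*s^2 + (64)*a₁^3*a₂ + (-80)*a₁^3*a₂*s + (-40)*a₁^3*a₂*s^2 + (36)*a₁^4 + (-216)*a₁^4*s + (284)*a₁^4*s^2 + (-48)*a₁^4*s^3) * hs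
  linarith [t0, t1, t2, t3, t4, t5, t6, t7, t8, t9, t10, t11, t12, t13, hkey]

/-- Quadratic form comparison lemma (Lemma B.1): if `0 < a₁ ≤ a₂ ≤ a₃` and
`a₃/a₁ ≤ √2`, then `Q₁ ≤ c₀ Q₂` with `c₀ = 1/(√2 - 1/2)`. -/
theorem stmt_0 (a₁ a₂ a₃ : ℝ) (h₁ : 0 < a₁) (h₁₂ : a₁ ≤ a₂) (h₂₃ : a₂ ≤ a₃)
    (hratio : a₃ / a₁ ≤ Real.sqrt 2) (k₁ k₂ : ℝ) :
    (a₁^2 + a₃^2) / a₃^2 * k₁^2 + 2*a₁*a₂ / a₃^2 * k₁*k₂ + (a₂^2 + a₃^2) / a₃^2 * k₂^2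
      ≤ (1 / (Real.sqrt 2 - 1/2)) *
        (2*a₁/a₃ * k₁^2 + 2*(a₁ + a₂ - a₃)/a₃ * k₁*k₂ + 2*a₂/a₃ * k₂^2) := by
  set s := Real.sqrt 2 with hsdef
  have hs : s^2 = 2 := Real.sq_sqrt (by norm_num)
  have hs0 : 0 ≤ s := Real.sqrt_nonneg 2
  have hs54 : (5:ℝ)/4 ≤ s := by nlinarith
  have ha : a₃ ≤ s * a₁ := by
    have := (div_le_iff₀ h₁).mp hratio
    linarith [this]
  have h3 : 0 < a₃ := lt_of_lt_of_le h₁ (h₁₂.trans h₂₃)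
  have hc : (1:ℝ)/(s - 1/2) = (2+4*s)/7 := by
    rw [div_eq_div_iff (by linarith) (by norm_num)]
    linear_combination (-4 : ℝ) * hs
  rw [hc]
  -- 7-scaled coefficients of the difference quadratic form
  set A := 2*(2+4*s)*a₁*a₃ - 7*a₁^2 - 7*a₃^2 with hA
  set B := 2*(2+4*s)*a₃*(a₁+a₂-a₃) - 14*a₁*a₂ with hB
  set C := 2*(2+4*s)*a₂*a₃ - 7*a₂^2 - 7*a₃^2 with hC
  have hApos : 0 < A := by
    have h1 : 0 ≤ (a₃ - a₁) * (s*a₁ - a₃) :=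
      mul_nonneg (by linarith) (by linarith)
    have h2 : 0 ≤ a₁ * (s*a₁ - a₃) := mul_nonneg h₁.le (by linarith)
    nlinarith [mul_pos h₁ h₁, h1, h2]
  have hdisc : B^2 ≤ 4*A*C := disc_aux a₁ a₂ a₃ s h₁ h₁₂ h₂₃ hs hs0 ha
  have hX : 0 ≤ A*k₁^2 + B*(k₁*k₂) + C*k₂^2 := by
    rcases le_or_gt 0 (A*k₁^2 + B*(k₁*k₂) + C*k₂^2) with h | h
    · exact h
    · exfalso
      nlinarith [sq_nonneg (2*A*k₁ + B*k₂), mul_nonneg (sub_nonneg.2 hdisc) (sq_nonneg k₂),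
        mul_pos hApos (neg_pos.2 h)]
  have key : (a₁^2 + a₃^2)*k₁^2 + 2*a₁*a₂*(k₁*k₂) + (a₂^2 + a₃^2)*k₂^2
      ≤ (2+4*s)/7 * (2*a₁*a₃*k₁^2 + 2*(a₁+a₂-a₃)*a₃*(k₁*k₂) + 2*a₂*a₃*k₂^2) := by
    rw [hA, hB, hC] at hX
    linarith [hX]
  have e1 : (a₁^2 + a₃^2) / a₃^2 * k₁^2 + 2*a₁*a₂ / a₃^2 * k₁*k₂ + (a₂^2 + a₃^2) / a₃^2 * k₂^2
      = ((a₁^2 + a₃^2)*k₁^2 + 2*a₁*a₂*(k₁*k₂) + (a₂^2 + a₃^2)*k₂^2) / a₃^2 := by ring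
  have e2 : (2+4*s)/7 * (2*a₁/a₃ * k₁^2 + 2*(a₁ + a₂ - a₃)/a₃ * k₁*k₂ + 2*a₂/a₃ * k₂^2)
      = ((2+4*s)/7 * (2*a₁*a₃*k₁^2 + 2*(a₁+a₂-a₃)*a₃*(k₁*k₂) + 2*a₂*a₃*k₂^2)) / a₃^2 := by
    field_simp
  rw [e1, e2]
  gcongr
end

section
/- Let $a_1, a_2, a_3$ be reals with $1 \le a_1 \le a_2 \le a_3 \le \sqrt{2}$, and let $k_1, k_2, k_3$ be reals with $a_1k_1 + a_2k_2 + a_3k_3 = 0$. Set $|A|^2 = k_1^2+k_2^2+k_3^2$ and $R = 2(k_1k_2+k_2k_3+k_3k_1)$. Then $R \le 0$ and $-R \le |A|^2 \le -c_0 R$, where $c_0 = \frac{1}{\sqrt{2}-\frac{1}{2}}$. -/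
private lemma auxT (a₁ a₂ a₃ c : ℝ) (h1 : 1 ≤ a₁) (h12 : a₁ ≤ a₂) (h23 : a₂ ≤ a₃)
    (h3 : a₃ ≤ c) (hc : c^2 = 2) (k₁ k₂ : ℝ) :
    0 ≤ a₁*k₁^2 + a₂*k₂^2 + (a₁+a₂-a₃)*(k₁*k₂) := by
  rcases le_or_gt 0 (k₁*k₂) with h | h
  · nlinarith [sq_nonneg k₁, sq_nonneg k₂, sq_nonneg c,
      mul_nonneg (sub_nonneg.2 (by nlinarith : a₃ ≤ a₁+a₂)) h]
  · nlinarith [sq_nonneg (k₁+k₂), sq_nonneg (k₁-k₂),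
      mul_nonneg (sub_nonneg.2 h12) (sq_nonneg k₂),
      mul_nonneg (sub_nonneg.2 h23) (le_of_lt (neg_pos.2 h)), sq_nonneg k₁]

private lemma auxG (c u v w : ℝ) (hc : c^2 = 2) (hu : 0 ≤ u) (hu' : u ≤ c-1)
    (hv : 0 ≤ v) (hv' : v ≤ c-1) (hw : 0 ≤ w) (hw' : w ≤ c-1) :
    0 ≤ 2*u + 2*v + 2*c*w + 4*(u*v) - 4*(u*w) - 4*(v*w) - (1+2*c)*(u^2+v^2+w^2) := by
  have hd : (0:ℝ) < c - 1 := by nlinarith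
  have key : (c-1) * (2*u + 2*v + 2*c*w + 4*(u*v) - 4*(u*w) - 4*(v*w) - (1+2*c)*(u^2+v^2+w^2))
      = (1+2*c)*((c-1)*(u*((c-1)-u) + v*((c-1)-v) + w*((c-1)-w)))
        + u*(((c-1)-v)*((c-1)-w)) + v*(((c-1)-u)*((c-1)-w))
        + 3*(w*(((c-1)-u)*((c-1)-v))) + 6*((u*v)*((c-1)-w)) + u*(v*w) := by
    linear_combination (2*w - 2*w*c + 2*v - 2*v*c + 2*u - 2*u*c) * hc
  have h1c : (0:ℝ) ≤ 1 + 2*c := by nlinarith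
  have t1 : 0 ≤ (1+2*c)*((c-1)*(u*((c-1)-u) + v*((c-1)-v) + w*((c-1)-w))) := by
    apply mul_nonneg h1c; apply mul_nonneg hd.le
    have := mul_nonneg hu (sub_nonneg.2 hu')
    have := mul_nonneg hv (sub_nonneg.2 hv')
    have := mul_nonneg hw (sub_nonneg.2 hw')
    linarith
  have t2 : 0 ≤ u*(((c-1)-v)*((c-1)-w)) :=
    mul_nonneg hu (mul_nonneg (by linarith) (by linarith))
  have t3 : 0 ≤ v*(((c-1)-u)*((c-1)-w)) :=
    mul_nonneg hv (mul_nonneg (by linarith) (by linarith))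
  have t4 : 0 ≤ 3*(w*(((c-1)-u)*((c-1)-v))) := by
    have := mul_nonneg hw (mul_nonneg (sub_nonneg.2 hu') (sub_nonneg.2 hv')); linarith
  have t5 : 0 ≤ 6*((u*v)*((c-1)-w)) := by
    have := mul_nonneg (mul_nonneg hu hv) (sub_nonneg.2 hw'); linarith
  have t6 : 0 ≤ u*(v*w) := mul_nonneg hu (mul_nonneg hv hw)
  have h2 : (c-1) * 0 ≤ (c-1) * (2*u + 2*v + 2*c*w + 4*(u*v) - 4*(u*w) - 4*(v*w) - (1+2*c)*(u^2+v^2+w^2)) := by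
    rw [mul_zero]; linarith [key]
  exact le_of_mul_le_mul_left h2 hd

private lemma auxQpos (a₂ a₃ c : ℝ) (h1 : 1 ≤ a₂) (h23 : a₂ ≤ a₃)
    (h3 : a₃ ≤ c) (hc : c^2 = 2) :
    0 < 4*a₃*a₂ - (2*c-1)*(a₃^2+a₂^2) := by
  have key : 0 ≤ (2*c-1)*((c-1-a₃+a₂)*(c-1+a₃-a₂)) := by
    apply mul_nonneg (by nlinarith) (mul_nonneg (by linarith) (by linarith))
  have h6 : 4*c ≤ 6 := by nlinarith [sq_nonneg (2*c-3)]
  have haa : 1 ≤ a₂*a₃ := by nlinarith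
  nlinarith [sq_nonneg (12*c-17), mul_nonneg (sub_nonneg.2 h6) (sub_nonneg.2 haa)]

private lemma auxE (a₁ a₂ a₃ c : ℝ) (h1 : 1 ≤ a₁) (h12 : a₁ ≤ a₂) (h23 : a₂ ≤ a₃)
    (h3 : a₃ ≤ c) (hc : c^2 = 2) :
    (2*a₃*(a₁+a₂-a₃) - (2*c-1)*(a₁*a₂))^2 ≤
      (4*a₃*a₁ - (2*c-1)*(a₃^2+a₁^2)) * (4*a₃*a₂ - (2*c-1)*(a₃^2+a₂^2)) := by
  have hG := auxG c (a₁-1) (a₂-1) (c-a₃) hc (by linarith) (by linarith) (by linarith)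
    (by linarith) (by linarith) (by linarith)
  have key : (3+2*c) * ((4*a₃*a₁ - (2*c-1)*(a₃^2+a₁^2)) * (4*a₃*a₂ - (2*c-1)*(a₃^2+a₂^2))
      - (2*a₃*(a₁+a₂-a₃) - (2*c-1)*(a₁*a₂))^2)
      = a₃^2 * (2*(a₁-1) + 2*(a₂-1) + 2*c*(c-a₃) + 4*((a₁-1)*(a₂-1)) - 4*((a₁-1)*(c-a₃))
        - 4*((a₂-1)*(c-a₃)) - (1+2*c)*((a₁-1)^2+(a₂-1)^2+(c-a₃)^2)) := by
    linear_combination (-1*a₃^2 + 2*a₃^2*c - 4*a₃^3 + 4*a₃^4 + 8*a₃^4*c - 16*a₂*a₃^3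
      + 4*a₂^2*a₃^2 + 8*a₂^2*a₃^2*c - 16*a₁*a₃^3 - 16*a₁*a₂*a₃^2 + 4*a₁^2*a₃^2
      + 8*a₁^2*a₃^2*c) * hc
  have h3c : (0:ℝ) < 3 + 2*c := by nlinarith
  have h2 : (3+2*c) * 0 ≤ (3+2*c) * ((4*a₃*a₁ - (2*c-1)*(a₃^2+a₁^2)) * (4*a₃*a₂ - (2*c-1)*(a₃^2+a₂^2))
      - (2*a₃*(a₁+a₂-a₃) - (2*c-1)*(a₁*a₂))^2) := by
    rw [mul_zero, key]; exact mul_nonneg (sq_nonneg a₃) hG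
  have := le_of_mul_le_mul_left h2 h3c
  linarith

/-- Lemma 3.2: pinching of `|A|²` against `-R` for Φ-stationary hypersurfaces,
expressed via principal curvatures satisfying `a₁k₁ + a₂k₂ + a₃k₃ = 0`. -/
theorem stmt_8 (a₁ a₂ a₃ : ℝ) (h1 : 1 ≤ a₁) (h12 : a₁ ≤ a₂) (h23 : a₂ ≤ a₃)
    (h3 : a₃ ≤ Real.sqrt 2) (k₁ k₂ k₃ : ℝ) (hstat : a₁*k₁ + a₂*k₂ + a₃*k₃ = 0) :
    2*(k₁*k₂ + k₂*k₃ + k₃*k₁) ≤ 0 ∧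
    -(2*(k₁*k₂ + k₂*k₃ + k₃*k₁)) ≤ k₁^2 + k₂^2 + k₃^2 ∧
    k₁^2 + k₂^2 + k₃^2 ≤ -((1 / (Real.sqrt 2 - 1/2)) * (2*(k₁*k₂ + k₂*k₃ + k₃*k₁))) := by
  set c := Real.sqrt 2 with hcdef
  have hc : c^2 = 2 := Real.sq_sqrt (by norm_num)
  have hc1 : (1:ℝ) < c := by nlinarith [Real.sqrt_nonneg 2]
  have ha3 : (0:ℝ) < a₃ := by linarith
  have hT := auxT a₁ a₂ a₃ c h1 h12 h23 h3 hc k₁ k₂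
  -- identity: a₃ * (-R) = 2*T
  have idR : a₃ * (-(2*(k₁*k₂ + k₂*k₃ + k₃*k₁)))
      = 2 * (a₁*k₁^2 + a₂*k₂^2 + (a₁+a₂-a₃)*(k₁*k₂)) := by
    linear_combination (-2*(k₁+k₂)) * hstat
  -- Part 1: R ≤ 0
  have part1 : 2*(k₁*k₂ + k₂*k₃ + k₃*k₁) ≤ 0 := by
    have h2 : a₃ * 0 ≤ a₃ * (-(2*(k₁*k₂ + k₂*k₃ + k₃*k₁))) := by
      rw [mul_zero, idR]; linarith
    have := le_of_mul_le_mul_left h2 ha3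
    linarith
  refine ⟨part1, by nlinarith [sq_nonneg (k₁+k₂+k₃)], ?_⟩
  -- Part 3
  have hP := auxQpos a₁ a₃ c h1 (le_trans h12 h23) h3 hc
  have hQ := auxQpos a₂ a₃ c (le_trans h1 h12) h23 h3 hc
  have hE := auxE a₁ a₂ a₃ c h1 h12 h23 h3 hc
  -- quadratic form nonneg
  have hform : 0 ≤ (4*a₃*a₁ - (2*c-1)*(a₃^2+a₁^2))*k₁^2 + (4*a₃*a₂ - (2*c-1)*(a₃^2+a₂^2))*k₂^2
      + 2*(2*a₃*(a₁+a₂-a₃) - (2*c-1)*(a₁*a₂))*(k₁*k₂) := by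
    set P := 4*a₃*a₁ - (2*c-1)*(a₃^2+a₁^2)
    set Q := 4*a₃*a₂ - (2*c-1)*(a₃^2+a₂^2)
    set S := 2*a₃*(a₁+a₂-a₃) - (2*c-1)*(a₁*a₂)
    have h2 : Q * 0 ≤ Q * (P*k₁^2 + Q*k₂^2 + 2*S*(k₁*k₂)) := by
      rw [mul_zero]
      nlinarith [sq_nonneg (Q*k₂ + S*k₁), mul_nonneg (sub_nonneg.2 hE) (sq_nonneg k₁)]
    exact le_of_mul_le_mul_left h2 hQ
  -- identity: quadratic form = 4a₃T - (2c-1) a₃² |A|²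
  have idQ : (4*a₃*a₁ - (2*c-1)*(a₃^2+a₁^2))*k₁^2 + (4*a₃*a₂ - (2*c-1)*(a₃^2+a₂^2))*k₂^2
      + 2*(2*a₃*(a₁+a₂-a₃) - (2*c-1)*(a₁*a₂))*(k₁*k₂)
      = 4*a₃*(a₁*k₁^2 + a₂*k₂^2 + (a₁+a₂-a₃)*(k₁*k₂))
        - (2*c-1)*(a₃^2*(k₁^2+k₂^2+k₃^2)) := by
    linear_combination ((2*c-1)*(a₃*k₃ - a₁*k₁ - a₂*k₂)) * hstat
  -- conclude: (2c-1) a₃² |A|² ≤ 2 a₃² (-R)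
  have key : (2*c-1) * (k₁^2+k₂^2+k₃^2) ≤ 2 * (-(2*(k₁*k₂ + k₂*k₃ + k₃*k₁))) := by
    have ha32 : (0:ℝ) < a₃^2 := by positivity
    have h2 : a₃^2 * ((2*c-1) * (k₁^2+k₂^2+k₃^2)) ≤ a₃^2 * (2 * (-(2*(k₁*k₂ + k₂*k₃ + k₃*k₁)))) := by
      nlinarith [hform, idQ, idR, mul_le_mul_of_nonneg_left (le_of_eq idR.symm) (le_of_lt ha3)]
    exact le_of_mul_le_mul_left h2 ha32
  have hden : (0:ℝ) < c - 1/2 := by linarith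
  have hrw : -((1 / (c - 1/2)) * (2*(k₁*k₂ + k₂*k₃ + k₃*k₁)))
      = (-(2*(k₁*k₂ + k₂*k₃ + k₃*k₁))) / (c - 1/2) := by ring
  rw [hrw, le_div_iff₀ hden]
  linarith
end

section
/- Let $\alpha, \beta$ be reals with $2^{-1/2} \le \alpha \le \beta \le 1$. Then $c_1 := \frac{(1-\alpha)^2}{1+\alpha^2} + \left(\frac{1-\beta-\alpha\beta+\alpha^2}{1+\alpha^2}\right)^2 \cdot \frac{1+\alpha^2}{1+\alpha^2+\beta^2} \le \frac{3}{2} - \sqrt{2}$. -/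
/-- Explicit estimate: `c₁ ≤ 3/2 - √2` for `2^{-1/2} ≤ α ≤ β ≤ 1`. -/
theorem stmt_9 (α β : ℝ) (hα : Real.sqrt 2⁻¹ ≤ α) (hαβ : α ≤ β) (hβ : β ≤ 1) :
    (1 - α)^2 / (1 + α^2) +
      ((1 - β - α*β + α^2) / (1 + α^2))^2 * ((1 + α^2) / (1 + α^2 + β^2))
      ≤ 3/2 - Real.sqrt 2 := by
  set r := Real.sqrt 2 with hr
  have hr2 : r^2 = 2 := Real.sq_sqrt (by norm_num)
  have hrpos : 0 < r := Real.sqrt_pos.mpr (by norm_num)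
  have hri : r⁻¹ ≤ α := by rw [hr, ← Real.sqrt_inv]; exact hα
  have hra : 1 ≤ r * α := by
    have := mul_le_mul_of_nonneg_left hri hrpos.le
    rwa [mul_inv_cancel₀ hrpos.ne'] at this
  have hrl : (1.4:ℝ) ≤ r := by nlinarith [hr2, hrpos]
  have hru : r ≤ 1.5 := by nlinarith [hr2, hrpos]
  have hu : 0 ≤ 2*α - r := by nlinarith [hra, hr2, hrpos]
  have hα1 : α ≤ 1 := le_trans hαβ hβ
  -- one-variable estimate
  have h3 : 4*(1-α)^2 ≤ (3 - 2*r)*(1 + 2*α^2) := by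
    have id1 : (3 - 2*r)*(1 + 2*α^2) - 4*(1-α)^2
        = (2*α - r)*((2*r-1)*(1-α)) + (3/2)*((2*α - r)*(2-r)) + (r^2 - 2)*(1/2 - 2*α) := by
      ring
    nlinarith [mul_nonneg hu (mul_nonneg (by linarith : (0:ℝ) ≤ 2*r-1) (by linarith : (0:ℝ) ≤ 1-α)),
      mul_nonneg hu (by linarith : (0:ℝ) ≤ 2-r), id1, hr2]
  -- numerator bound
  have hN : (1 - β - α*β + α^2)^2 ≤ (1-α)^2 := by
    nlinarith [mul_nonneg (sub_nonneg.2 hαβ) (by linarith : (0:ℝ) ≤ 1+α),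
      mul_nonneg (sub_nonneg.2 hβ) (by linarith : (0:ℝ) ≤ 1+α), sq_nonneg (1-α),
      mul_nonneg (mul_nonneg (sub_nonneg.2 hαβ) (by linarith : (0:ℝ) ≤ 1+α))
        (add_nonneg (mul_nonneg (sub_nonneg.2 hβ) (by linarith : (0:ℝ) ≤ 1+α)) (sq_nonneg (1-α)))]
  have h1 : (0:ℝ) < 1 + α^2 := by positivity
  have h2 : (0:ℝ) < 1 + α^2 + β^2 := by positivity
  have hq : (0:ℝ) < 1 + 2*α^2 := by positivity
  have hDE : (0:ℝ) < (1 + α^2) * (1 + α^2 + β^2) := by positivity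
  -- main polynomial inequality, multiplied by (1+2α²)
  have keyP : (1 + 2*α^2) * ((1-α)^2*(1+α^2+β^2) + (1 - β - α*β + α^2)^2)
      ≤ (1 + 2*α^2) * ((3/2 - r) * ((1+α^2)*(1+α^2+β^2))) := by
    nlinarith [mul_nonneg (sub_nonneg.2 h3) hDE.le,
      mul_nonneg (sub_nonneg.2 hN) hq.le,
      mul_nonneg (sq_nonneg (1-α)) (by nlinarith [mul_nonneg (sub_nonneg.2 hαβ) (by linarith : (0:ℝ) ≤ β + α)] : (0:ℝ) ≤ β^2 - α^2)]
  have key : (1-α)^2*(1+α^2+β^2) + (1 - β - α*β + α^2)^2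
      ≤ (3/2 - r) * ((1+α^2)*(1+α^2+β^2)) := le_of_mul_le_mul_left keyP hq
  have heq : (1 - α)^2 / (1 + α^2) +
      ((1 - β - α*β + α^2) / (1 + α^2))^2 * ((1 + α^2) / (1 + α^2 + β^2))
      = ((1-α)^2*(1+α^2+β^2) + (1-β-α*β+α^2)^2)/((1+α^2)*(1+α^2+β^2)) := by
    field_simp
  rw [heq, div_le_iff₀ hDE]
  linarith [key]
end

section
/- Let $k_1, k_2, k_3$ be reals, let $y_1, y_2, y_3$ be reals with $y_1^2+y_2^2+y_3^2 = 1$. Then $k_1(k_2+k_3)y_1^2 + k_2(k_3+k_1)y_2^2 + k_3(k_1+k_2)y_3^2 \ge -\frac{1}{\sqrt{2}}(k_1^2+k_2^2+k_3^2)$. -/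
lemma aux_12 (a b c : ℝ) : a*(b+c) ≥ -(1 / Real.sqrt 2) * (a^2 + b^2 + c^2) := by
  have hs : Real.sqrt 2 ^ 2 = 2 := Real.sq_sqrt (by norm_num)
  have hs0 : Real.sqrt 2 > 0 := Real.sqrt_pos.2 (by norm_num)
  have h : 0 ≤ (Real.sqrt 2 * a + b + c)^2 + (b - c)^2 := by positivity
  have key : Real.sqrt 2 * (a*(b+c)) + (a^2+b^2+c^2) ≥ 0 := by nlinarith [h, hs]
  rw [ge_iff_le, neg_mul, neg_le, div_mul_eq_mul_div, one_mul, le_div_iff₀ hs0]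
  nlinarith [key]

/-- Pointwise Ricci lower bound in a principal frame:
`Ric(v,v) ≥ -(1/√2)|A|²` for a unit vector `v = Σ yᵢ eᵢ`. -/
theorem stmt_12 (k₁ k₂ k₃ y₁ y₂ y₃ : ℝ) (hy : y₁^2 + y₂^2 + y₃^2 = 1) :
    k₁*(k₂ + k₃)*y₁^2 + k₂*(k₃ + k₁)*y₂^2 + k₃*(k₁ + k₂)*y₃^2
      ≥ -(1 / Real.sqrt 2) * (k₁^2 + k₂^2 + k₃^2) := by
  have h1 := aux_12 k₁ k₂ k₃
  have h2 : k₂*(k₃+k₁) ≥ -(1 / Real.sqrt 2) * (k₁^2 + k₂^2 + k₃^2) := by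
    rw [show k₁^2+k₂^2+k₃^2 = k₂^2+k₃^2+k₁^2 from by ring]; exact aux_12 k₂ k₃ k₁
  have h3 : k₃*(k₁+k₂) ≥ -(1 / Real.sqrt 2) * (k₁^2 + k₂^2 + k₃^2) := by
    rw [show k₁^2+k₂^2+k₃^2 = k₃^2+k₁^2+k₂^2 from by ring]; exact aux_12 k₃ k₁ k₂
  set S := -(1 / Real.sqrt 2) * (k₁^2 + k₂^2 + k₃^2) with hS
  have h4 : S*y₁^2 + S*y₂^2 + S*y₃^2 = S := by
    rw [← mul_add, ← mul_add, hy, mul_one]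
  nlinarith [mul_le_mul_of_nonneg_right h1 (sq_nonneg y₁),
    mul_le_mul_of_nonneg_right h2 (sq_nonneg y₂),
    mul_le_mul_of_nonneg_right h3 (sq_nonneg y₃), h4]
end
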